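/- arXiv:0809.1546 — 2 statements merged into one kernel-verified Lean document; each statement's English description precedes it below -/
import Mathlib

section
/- Let n ≥ 1 and let (γ_m) be a sequence of pairwise distinct elements of PSL(n+1,ℂ). Then there exist a subsequence of (γ_m) and a quasi-projective map γ of ℙⁿ_ℂ such that the subsequence converges to γ in the sense of quasi-projective transformations, i.e., uniformly on compact subsets of ℙⁿ_ℂ ∖ Ker(γ). -/
open Filter Topology Matrix

noncomputable section

abbrev Vec (n : ℕ) := Fin (n + 1) → ℂ
abbrev Mat (n : ℕ) := Matrix (Fin (n + 1)) (Fin (n + 1)) ℂ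
abbrev Pn (n : ℕ) := Projectivization ℂ (Vec n)

instance (n : ℕ) : TopologicalSpace (Pn n) :=
  inferInstanceAs (TopologicalSpace (Quotient (projectivizationSetoid ℂ (Vec n))))

def herm (n : ℕ) (u v : Vec n) : ℂ :=
  -(u 0 * (starRingEnd ℂ) (v 0)) + ∑ j : Fin n, u j.succ * (starRingEnd ℂ) (v j.succ)

def Hball (n : ℕ) : Set (Pn n) :=
  {p | ∃ v : Vec n, ∃ hv : v ≠ 0, p = Projectivization.mk ℂ v hv ∧ (herm n v v).re < 0}

def Hbdry (n : ℕ) : Set (Pn n) :=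
  {p | ∃ v : Vec n, ∃ hv : v ≠ 0, p = Projectivization.mk ℂ v hv ∧ herm n v v = 0}

abbrev GLn (n : ℕ) := Matrix.GeneralLinearGroup (Fin (n + 1)) ℂ
abbrev PGLn (n : ℕ) := GLn n ⧸ Subgroup.center (GLn n)

lemma glInj {n : ℕ} (A : GLn n) : Function.Injective (Matrix.mulVecLin (A : Mat n)) := by
  intro x y h
  simp only [Matrix.mulVecLin_apply] at h
  have h2 : ((A⁻¹ : GLn n) : Mat n) *ᵥ ((A : Mat n) *ᵥ x)
      = ((A⁻¹ : GLn n) : Mat n) *ᵥ ((A : Mat n) *ᵥ y) := by rw [h]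
  rwa [Matrix.mulVec_mulVec, Matrix.mulVec_mulVec, Units.inv_mul, Matrix.one_mulVec,
    Matrix.one_mulVec] at h2

def actGL {n : ℕ} (A : GLn n) : Pn n → Pn n :=
  Projectivization.map (Matrix.mulVecLin (A : Mat n)) (glInj A)

def act {n : ℕ} (g : PGLn n) : Pn n → Pn n := actGL (Quotient.out g)

/-- The subset `U(1,n)` of `GL(n+1,ℂ)`: matrices preserving the Hermitian form. -/
def unitaryGL (n : ℕ) : Set (GLn n) :=
  {A | ∀ u v : Vec n, herm n ((A : Mat n) *ᵥ u) ((A : Mat n) *ᵥ v) = herm n u v}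

/-- `PU(1,n)`, the image of `U(1,n)` in `PGL(n+1,ℂ)`. -/
def PUset (n : ℕ) : Set (PGLn n) := (QuotientGroup.mk : GLn n → PGLn n) '' unitaryGL n

/-- The center of the ball `𝐇ⁿ_ℂ`, namely the image of `(1,0,…,0)`. -/
def basePt (n : ℕ) : Pn n :=
  Projectivization.mk ℂ (Pi.single 0 1) (by
    intro h
    have := congrFun h 0
    simp [Pi.single_eq_same] at this)

lemma basePt_mem_Hball (n : ℕ) : basePt n ∈ Hball n := by
  refine ⟨Pi.single 0 1, _, rfl, ?_⟩
  have : herm n (Pi.single 0 1) (Pi.single 0 1) = -1 := by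
    simp [herm, Pi.single_eq_same, Pi.single_eq_of_ne (Fin.succ_ne_zero _)]
  rw [this]
  norm_num

/-- The set of accumulation points of the orbit `G • x` in `ℙⁿ_ℂ`: limits of
`g_m • x` along sequences of pairwise distinct elements of `G`. -/
def accPts {n : ℕ} (G : Subgroup (PGLn n)) (x : Pn n) : Set (Pn n) :=
  {z | ∃ g : ℕ → G, Function.Injective g ∧
    Tendsto (fun m => act (g m : PGLn n) x) atTop (𝓝 z)}

/-- The Chen–Greenberg limit set of `G`. -/
def LambdaCG {n : ℕ} (G : Subgroup (PGLn n)) : Set (Pn n) := accPts G (basePt n)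

/-- Uniform convergence on `K` of a sequence of self-maps of `ℙⁿ_ℂ` to `F`, expressed
via open neighborhoods of the diagonal.  Since `ℙⁿ_ℂ` is compact Hausdorff, this is
equivalent to uniform convergence on `K` with respect to any metric inducing its
topology. -/
def UnifConvOn {n : ℕ} (f : ℕ → Pn n → Pn n) (F : Pn n → Pn n) (K : Set (Pn n)) : Prop :=
  ∀ W : Set (Pn n × Pn n), IsOpen W → (∀ y, (y, y) ∈ W) →
    ∀ᶠ m in atTop, ∀ x ∈ K, (F x, f m x) ∈ W

/-- Uniform convergence on all compact subsets of `S`. -/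
def UnifConvOnCompacts {n : ℕ} (f : ℕ → Pn n → Pn n) (F : Pn n → Pn n)
    (S : Set (Pn n)) : Prop :=
  ∀ K ⊆ S, IsCompact K → UnifConvOn f F K

/-- The equicontinuity region of a subgroup `G ≤ PGL(n+1,ℂ)`: points having an open
neighborhood `U` on which every sequence in `G` has a subsequence converging uniformly
on compact subsets of `U`. -/
def eqRegion {n : ℕ} (G : Subgroup (PGLn n)) : Set (Pn n) :=
  {z | ∃ U : Set (Pn n), IsOpen U ∧ z ∈ U ∧
    ∀ g : ℕ → G, ∃ φ : ℕ → ℕ, StrictMono φ ∧ ∃ F : Pn n → Pn n,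
      UnifConvOnCompacts (fun m => act (g (φ m) : PGLn n)) F U}

/-- The equicontinuity region of the family of maps `{f m : m ∈ ℕ}`. -/
def eqRegionFam {n : ℕ} (f : ℕ → Pn n → Pn n) : Set (Pn n) :=
  {z | ∃ U : Set (Pn n), IsOpen U ∧ z ∈ U ∧
    ∀ s : ℕ → ℕ, ∃ φ : ℕ → ℕ, StrictMono φ ∧ ∃ F : Pn n → Pn n,
      UnifConvOnCompacts (fun k => f (s (φ k))) F U}

/-- The projectivization of a linear subspace `W ⊆ ℂ^{n+1}`, as a subset of `ℙⁿ_ℂ`. -/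
def projSet {n : ℕ} (W : Submodule ℂ (Vec n)) : Set (Pn n) := {p | p.rep ∈ W}

/-- A complex projective hyperplane: the projectivization of an `n`-dimensional
subspace of `ℂ^{n+1}`. -/
def IsProjHyperplane {n : ℕ} (S : Set (Pn n)) : Prop :=
  ∃ W : Submodule ℂ (Vec n), Module.finrank ℂ W = n ∧ S = projSet W

/-- A complex projective line: the projectivization of a `2`-dimensional subspace. -/
def IsProjLine {n : ℕ} (S : Set (Pn n)) : Prop :=
  ∃ W : Submodule ℂ (Vec n), Module.finrank ℂ W = 2 ∧ S = projSet W

/-- The kernel in `ℙⁿ_ℂ` of the quasi-projective map induced by the nonzero matrix `M`. -/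
def qKer {n : ℕ} (M : Mat n) : Set (Pn n) := projSet (LinearMap.ker (Matrix.mulVecLin M))

/-- The image in `ℙⁿ_ℂ` of the quasi-projective map induced by the nonzero matrix `M`. -/
def qIm {n : ℕ} (M : Mat n) : Set (Pn n) := projSet (LinearMap.range (Matrix.mulVecLin M))

/-- The quasi-projective map `ℙⁿ_ℂ ∖ Ker(M) → ℙⁿ_ℂ` induced by the nonzero matrix `M`
(extended to all of `ℙⁿ_ℂ` by the identity on `Ker(M)`, where it is irrelevant). -/
def qMap {n : ℕ} (M : Mat n) : Pn n → Pn n := fun p =>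
  if h : M *ᵥ p.rep ≠ 0 then Projectivization.mk ℂ (M *ᵥ p.rep) h else p

/-- Convergence of a sequence of transformations of `ℙⁿ_ℂ` to the quasi-projective map
induced by `M`, in the sense of quasi-projective transformations: uniform convergence
on compact subsets of `ℙⁿ_ℂ ∖ Ker(M)`. -/
def QPConv {n : ℕ} (f : ℕ → Pn n → Pn n) (M : Mat n) : Prop :=
  UnifConvOnCompacts f (qMap M) (qKer M)ᶜ

/-- The special linear group `SL(n+1,ℂ)`. -/
abbrev SLn (n : ℕ) := Matrix.SpecialLinearGroup (Fin (n + 1)) ℂ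

/-- The projective special linear group `PSL(n+1,ℂ) = SL(n+1,ℂ)/center`. -/
abbrev PSLn (n : ℕ) := SLn n ⧸ Subgroup.center (SLn n)

/-- The projective transformation induced by an element of `SL(n+1,ℂ)`. -/
def actSL {n : ℕ} (A : SLn n) : Pn n → Pn n := actGL (Matrix.SpecialLinearGroup.toGL A)

/-- The projective transformation induced by an element of `PSL(n+1,ℂ)` (via an
arbitrary representative; all representatives induce the same transformation). -/
def actPSL {n : ℕ} (g : PSLn n) : Pn n → Pn n := actSL (Quotient.out g)

/-- The projective hyperplane tangent to `∂𝐇ⁿ_ℂ` at `p`: the projectivization of the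
Hermitian orthogonal complement of a lift of `p`. -/
def tangentAt {n : ℕ} (p : Pn n) : Set (Pn n) := {q | herm n q.rep p.rep = 0}

end

/-!
Normalize lifts `A_m ∈ SL(n+1,ℂ)` of `γ_m` to unit norm; by compactness of the unit sphere a
subsequence of the rescaled matrices converges to a matrix `M`, nonzero since it has norm one.
The quasi-projective map `(N, [v]) ↦ [N v]` is jointly continuous wherever `N v ≠ 0`, so the
tube lemma upgrades the convergence `N_k → M` to uniform convergence of the induced maps on
compact subsets of `ℙⁿ_ℂ ∖ Ker(M)`.
-/

open Function

theorem isOpenMap_quotientMk_projectivizationSetoid {K V : Type*} [DivisionRing K]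
    [AddCommGroup V] [Module K V] [TopologicalSpace V] [ContinuousConstSMul K V] :
    IsOpenMap (Quotient.mk (projectivizationSetoid K V)) := by
  intro U hU
  have hsat : Quotient.mk (projectivizationSetoid K V) ⁻¹' (Quotient.mk _ '' U) =
      ⋃ c : Kˣ, (fun v : {v : V // v ≠ 0} => (⟨(c : K) • v.1, smul_ne_zero c.ne_zero v.2⟩ :
        {v : V // v ≠ 0})) ⁻¹' U := by
    ext v
    simp only [Set.mem_preimage, Set.mem_image, Set.mem_iUnion]
    constructor
    · rintro ⟨u, hu, huv⟩
      obtain ⟨c, hc⟩ := Quotient.exact huv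
      exact ⟨c, by convert hu using 1; exact Subtype.ext hc⟩
    · rintro ⟨c, hc⟩
      exact ⟨_, hc, Quotient.sound ⟨c, rfl⟩⟩
  rw [isOpen_coinduced]
  change IsOpen (Quotient.mk (projectivizationSetoid K V) ⁻¹' _)
  rw [hsat]
  exact isOpen_iUnion fun c => hU.preimage
    (((continuous_const_smul _).comp continuous_subtype_val).subtype_mk _)

theorem eventually_forall_mem_of_continuousAt_uncurry {α X Y : Type*} [TopologicalSpace α]
    [TopologicalSpace X] [TopologicalSpace Y] {f : α → X → Y} {a : α} {K : Set X}
    (hK : IsCompact K) (hf : ∀ x ∈ K, ContinuousAt (uncurry f) (a, x)) {W : Set (Y × Y)}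
    (hW : IsOpen W) (hdiag : ∀ x ∈ K, (f a x, f a x) ∈ W) :
    ∀ᶠ b in 𝓝 a, ∀ x ∈ K, (f a x, f b x) ∈ W := by
  refine hK.eventually_forall_of_forall_eventually fun x hx => ?_
  have hfix := (hf x hx).comp (x := (a, x)) (f := fun z : α × X => (a, z.2)) (by fun_prop)
  exact (hfix.prodMk_nhds (hf x hx)).eventually (hW.mem_nhds (hdiag x hx))

theorem exists_subseq_smul_tendsto_ne_zero {𝕜 E : Type*} [RCLike 𝕜] [NormedAddCommGroup E]
    [NormedSpace 𝕜 E] [ProperSpace E] (u : ℕ → E) (hu : ∀ m, u m ≠ 0) :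
    ∃ φ : ℕ → ℕ, StrictMono φ ∧ ∃ c : ℕ → 𝕜, (∀ k, c k ≠ 0) ∧ ∃ v : E, v ≠ 0 ∧
      Tendsto (fun k => c k • u (φ k)) atTop (𝓝 v) := by
  have hsphere : ∀ m, (‖u m‖⁻¹ : 𝕜) • u m ∈ Metric.sphere (0 : E) 1 := fun m => by
    rw [mem_sphere_zero_iff_norm, norm_smul_inv_norm (hu m)]
  obtain ⟨v, hv, φ, hφ, hlim⟩ := (isCompact_sphere (0 : E) 1).tendsto_subseq hsphere
  refine ⟨φ, hφ, fun k => (‖u (φ k)‖⁻¹ : 𝕜), fun k => by simpa using hu (φ k), v, ?_, hlim⟩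
  rintro rfl
  simp at hv

namespace Matrix.SpecialLinearGroup

theorem coe_ne_zero {ι R : Type*} [Fintype ι] [DecidableEq ι] [Nonempty ι] [CommRing R]
    [Nontrivial R] (A : SpecialLinearGroup ι R) : (A : Matrix ι ι R) ≠ 0 := fun h =>
  A.det_ne_zero (by rw [h, det_zero])

end Matrix.SpecialLinearGroup

section QuasiProjective

variable {n : ℕ}

theorem qMap_mk {M : Mat n} {v : Vec n} (hv : v ≠ 0) (h : M *ᵥ v ≠ 0) :
    qMap M (Projectivization.mk ℂ v hv) = Projectivization.mk ℂ (M *ᵥ v) h := by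
  obtain ⟨a, ha⟩ := Projectivization.exists_smul_eq_mk_rep ℂ v hv
  have hrep : M *ᵥ (Projectivization.mk ℂ v hv).rep = a • (M *ᵥ v) := by
    rw [← ha, Units.smul_def, mulVec_smul, Units.smul_def]
  rw [qMap, dif_pos (by rw [hrep]; exact smul_ne_zero a.ne_zero h)]
  exact (Projectivization.mk_eq_mk_iff ℂ _ _ _ h).mpr ⟨a, hrep.symm⟩

theorem qMap_smul {c : ℂ} (hc : c ≠ 0) (M : Mat n) : qMap (c • M) = qMap M := by
  funext p
  simp only [qMap, smul_mulVec, ne_eq, smul_eq_zero, hc, false_or]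
  split_ifs with h
  · rfl
  · exact (Projectivization.mk_eq_mk_iff' ℂ _ _ _ h).mpr ⟨c, rfl⟩

theorem actGL_eq_qMap (A : GLn n) : actGL A = qMap (A : Mat n) := by
  funext p
  conv_lhs => rw [← p.mk_rep]
  have h : (A : Mat n) *ᵥ p.rep ≠ 0 := fun h0 =>
    p.rep_nonzero (glInj A (by simpa [mulVecLin_apply] using h0))
  rw [actGL, Projectivization.map_mk, qMap, dif_pos h]
  rfl

theorem actPSL_eq_qMap (g : PSLn n) : actPSL g = qMap ((Quotient.out g : SLn n) : Mat n) :=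
  actGL_eq_qMap _

theorem mulVec_rep_ne_zero_of_notMem_qKer {M : Mat n} {p : Pn n} (hp : p ∉ qKer M) :
    M *ᵥ p.rep ≠ 0 :=
  fun h => hp (by simpa [qKer, projSet, mulVecLin_apply] using h)

theorem continuousAt_uncurry_qMap {M : Mat n} {p : Pn n} (h : M *ᵥ p.rep ≠ 0) :
    ContinuousAt (uncurry (qMap (n := n))) (M, p) := by
  set π : Mat n × {v : Vec n // v ≠ 0} → Mat n × Pn n :=
    Prod.map id (Quotient.mk (projectivizationSetoid ℂ (Vec n)))
  have hπ : IsOpenMap π := IsOpenMap.id.prodMap isOpenMap_quotientMk_projectivizationSetoid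
  have hπc : Continuous π := continuous_id.prodMap continuous_quot_mk
  set U : Set (Mat n × {v : Vec n // v ≠ 0}) := {z | z.1 *ᵥ z.2.1 ≠ 0}
  have hU : IsOpen U := isOpen_ne.preimage (by fun_prop)
  have hlift : ContinuousOn (uncurry qMap ∘ π) U := by
    have hmul : Continuous fun z : U => (⟨z.1.1 *ᵥ z.1.2.1, z.2⟩ : {v : Vec n // v ≠ 0}) :=
      ((continuous_fst.comp continuous_subtype_val).matrix_mulVec
        (continuous_subtype_val.comp (continuous_snd.comp continuous_subtype_val))).subtype_mk _
    rw [continuousOn_iff_continuous_domRestrict]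
    exact (continuous_quot_mk.comp hmul).congr fun z => (qMap_mk z.1.2.2 z.2).symm
  have hx : π (M, ⟨p.rep, p.rep_nonzero⟩) = (M, p) := congrArg (Prod.mk M) p.mk_rep
  rw [← hx, ContinuousAt, ← hπ.map_nhds_eq hπc.continuousAt, tendsto_map'_iff]
  exact hlift.continuousAt (hU.mem_nhds h)

theorem qpConv_qMap_of_tendsto {N : ℕ → Mat n} {M : Mat n} (hN : Tendsto N atTop (𝓝 M)) :
    QPConv (fun k => qMap (N k)) M := fun _ hK hKc _ hW hdiag =>
  hN.eventually (eventually_forall_mem_of_continuousAt_uncurry hKc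
    (fun _ hx => continuousAt_uncurry_qMap (mulVec_rep_ne_zero_of_notMem_qKer (hK hx))) hW
    fun _ _ => hdiag _)

end QuasiProjective

theorem exists_subseq_qp_convergence_general
    (n : ℕ) (γ : ℕ → PSLn n) :
    ∃ φ : ℕ → ℕ, StrictMono φ ∧ ∃ M : Mat n, M ≠ 0 ∧
      QPConv (fun k => actPSL (γ (φ k))) M := by
  -- `Mat n` has no norm instance; its topology and `ℂ`-action are those of the function space.
  obtain ⟨φ, hφ, c, hc, M, hM, hlim⟩ :=
    exists_subseq_smul_tendsto_ne_zero (𝕜 := ℂ) (E := Fin (n + 1) → Fin (n + 1) → ℂ)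
      (fun m => ((Quotient.out (γ m) : SLn n) : Mat n)) fun m => (Quotient.out (γ m)).coe_ne_zero
  refine ⟨φ, hφ, M, hM, ?_⟩
  have hrescale : (fun k => actPSL (γ (φ k))) =
      fun k => qMap (c k • ((Quotient.out (γ (φ k)) : SLn n) : Mat n)) := by
    funext k
    rw [actPSL_eq_qMap, qMap_smul (hc k)]
  rw [hrescale]
  exact qpConv_qMap_of_tendsto hlim

/-- Every sequence of pairwise distinct elements of `PSL(n+1,ℂ)` has a
subsequence converging, in the sense of quasi-projective transformations, to the
quasi-projective map induced by some nonzero linear map of `ℂ^{n+1}`. -/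
theorem exists_subseq_qp_convergence
    (n : ℕ) (hn : 1 ≤ n) (γ : ℕ → PSLn n) (hγ : Function.Injective γ) :
    ∃ φ : ℕ → ℕ, StrictMono φ ∧ ∃ M : Mat n, M ≠ 0 ∧
      QPConv (fun k => actPSL (γ (φ k))) M :=
  exists_subseq_qp_convergence_general n γ
end

section
/- Let n ≥ 1 and let (γ_m) be a sequence in PSL(n+1,ℂ) converging in the sense of quasi-projective transformations to a quasi-projective map γ whose kernel Ker(γ) is a complex projective hyperplane. Then the equicontinuity region of the family {γ_m : m ∈ ℕ} equals ℙⁿ_ℂ ∖ Ker(γ). -/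
open Filter Topology Matrix

/-!
Off the kernel, a sequence of indices either repeats one index infinitely often or tends to
infinity, and in both cases a subsequence converges uniformly on compact subsets of
`ℙⁿ ∖ Ker(γ)`.

Conversely, suppose a subsequence of `γ_m` converges to `F` uniformly on compact subsets of an
open `U ∋ z` with `z ∈ Ker(γ)`. As `Ker(γ)` is a hyperplane, `γ` collapses `ℙⁿ ∖ Ker(γ)` to a
single point `c`, so `F = c` on `U ∖ Ker(γ)`. Take a projective line `L` meeting `Ker(γ)` only
at `z` and a hyperplane `H` missing `c` and `F z`. Covering `L` by a compact neighbourhood of `z`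
in `U` and a compact set off `Ker(γ)`, uniform convergence eventually pushes all of `γ_m(L)` off
`H`; but `γ_m(L)` is a projective line, so it meets `H`.
-/

open Projectivization

lemma Projectivization.mk_eq_mk_iff_mul_eq_mul {K ι : Type*} [Field K] {v w : ι → K}
    (hv : v ≠ 0) (hw : w ≠ 0) : mk K v hv = mk K w hw ↔ ∀ i j, v i * w j = v j * w i := by
  rw [mk_eq_mk_iff']
  constructor
  · rintro ⟨a, rfl⟩ i j
    simp only [Pi.smul_apply, smul_eq_mul]
    ring
  · intro h
    obtain ⟨i, hi⟩ := Function.ne_iff.1 hw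
    refine ⟨v i / w i, funext fun j => ?_⟩
    simp only [Pi.smul_apply, smul_eq_mul, Pi.zero_apply] at hi ⊢
    field_simp
    linear_combination h i j

section Topology

variable {n : ℕ}

lemma isQuotientMap_mk' : IsQuotientMap (mk' ℂ : {v : Vec n // v ≠ 0} → Pn n) :=
  isQuotientMap_quotient_mk'

lemma isOpenMap_mk' : IsOpenMap (mk' ℂ : {v : Vec n // v ≠ 0} → Pn n) := by
  intro U hU
  rw [← isQuotientMap_mk'.isOpen_preimage]
  have hpre : mk' ℂ ⁻¹' (mk' ℂ '' U) = ⋃ c : ℂˣ,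
      (fun v : {v : Vec n // v ≠ 0} => (⟨c • v.1, (smul_eq_zero_iff_eq c).not.2 v.2⟩ :
        {v : Vec n // v ≠ 0})) ⁻¹' U := by
    ext a
    simp only [Set.mem_preimage, Set.mem_image, Set.mem_iUnion]
    constructor
    · rintro ⟨b, hb, hab⟩
      obtain ⟨c, hc⟩ := Quotient.eq''.1 hab
      exact ⟨c, by convert hb⟩
    · rintro ⟨c, hc⟩
      exact ⟨_, hc, Quotient.eq''.2 ⟨c, rfl⟩⟩
  rw [hpre]
  exact isOpen_iUnion fun c => hU.preimage (by fun_prop)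

instance : T2Space (Pn n) := by
  rw [t2Space_iff_of_isOpenQuotientMap
    (.of_isOpenMap_isQuotientMap isOpenMap_mk' isQuotientMap_mk')]
  simp only [mk'_eq_mk, mk_eq_mk_iff_mul_eq_mul, Set.ofPred_forall]
  have hcoord (i : Fin (n + 1)) : Continuous fun v : {v : Vec n // v ≠ 0} => v.1 i :=
    (continuous_apply i).comp continuous_subtype_val
  exact isClosed_iInter fun i => isClosed_iInter fun j => isClosed_eq
    ((hcoord i).fst'.mul (hcoord j).snd') ((hcoord j).fst'.mul (hcoord i).snd')

instance : CompactSpace (Pn n) := by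
  refine Function.Surjective.compactSpace
    (f := fun v : Metric.sphere (0 : Vec n) 1 => mk ℂ v.1 (ne_zero_of_mem_unit_sphere v))
    (isQuotientMap_mk'.continuous.comp (by fun_prop)) fun p => ?_
  have hr : ‖((‖p.rep‖⁻¹ : ℂ)) • p.rep‖ = 1 := norm_smul_inv_norm p.rep_nonzero
  refine ⟨⟨_, mem_sphere_zero_iff_norm.2 hr⟩, ?_⟩
  conv_rhs => rw [← p.mk_rep]
  exact (mk_eq_mk_iff' ℂ _ _ _ _).2 ⟨_, rfl⟩

lemma mk_mem_projSet_iff {W : Submodule ℂ (Vec n)} {v : Vec n} (hv : v ≠ 0) :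
    mk ℂ v hv ∈ projSet W ↔ v ∈ W := by
  obtain ⟨c, hc⟩ := exists_smul_eq_mk_rep ℂ v hv
  rw [projSet, Set.mem_ofPred_eq, ← hc]
  exact W.smul_mem_iff' c

lemma projSet_injective : Function.Injective (projSet : Submodule ℂ (Vec n) → Set (Pn n)) := by
  intro W₁ W₂ h
  ext v
  by_cases hv : v = 0
  · simp [hv]
  · rw [← mk_mem_projSet_iff hv, ← mk_mem_projSet_iff hv, h]

lemma isClosed_projSet (W : Submodule ℂ (Vec n)) : IsClosed (projSet W) := by
  rw [← isQuotientMap_mk'.isClosed_preimage]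
  have hpre : mk' ℂ ⁻¹' projSet W = Subtype.val ⁻¹' (W : Set (Vec n)) :=
    Set.ext fun v => mk_mem_projSet_iff v.2
  rw [hpre]
  exact W.closed_of_finiteDimensional.preimage continuous_subtype_val

end Topology

section UniformConvergence

variable {n : ℕ} {f : ℕ → Pn n → Pn n} {F : Pn n → Pn n}

lemma UnifConvOn.eventually_mapsTo {K T V : Set (Pn n)} (h : UnifConvOn f F K)
    (hT : IsClosed T) (hV : IsOpen V) (hTV : T ⊆ V) (hFK : Set.MapsTo F K T) :
    ∀ᶠ m in atTop, Set.MapsTo (f m) K V := by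
  have hW : IsOpen (V ×ˢ V ∪ Tᶜ ×ˢ Set.univ) :=
    (hV.prod hV).union (hT.isOpen_compl.prod isOpen_univ)
  have hdiag (y : Pn n) : (y, y) ∈ V ×ˢ V ∪ Tᶜ ×ˢ Set.univ := by
    by_cases hy : y ∈ T
    exacts [Or.inl ⟨hTV hy, hTV hy⟩, Or.inr ⟨hy, trivial⟩]
  filter_upwards [h _ hW hdiag] with m hm x hx
  rcases hm x hx with ⟨-, hfx⟩ | ⟨hFx, -⟩
  exacts [hfx, absurd (hFK hx) hFx]

lemma UnifConvOnCompacts.tendsto {S : Set (Pn n)} (h : UnifConvOnCompacts f F S) {x : Pn n}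
    (hx : x ∈ S) : Tendsto (fun m => f m x) atTop (𝓝 (F x)) := by
  refine tendsto_nhds.2 fun V hV hFx => ?_
  have hconv := h {x} (Set.singleton_subset_iff.2 hx) isCompact_singleton
  filter_upwards [hconv.eventually_mapsTo isClosed_singleton hV
    (Set.singleton_subset_iff.2 hFx) (Set.mapsTo_singleton.2 rfl)] with m hm
  exact hm rfl

lemma UnifConvOnCompacts.comp_tendsto {S : Set (Pn n)} (h : UnifConvOnCompacts f F S)
    {s : ℕ → ℕ} (hs : Tendsto s atTop atTop) : UnifConvOnCompacts (fun k => f (s k)) F S :=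
  fun K hKS hK W hW hdiag => hs.eventually (h K hKS hK W hW hdiag)

end UniformConvergence

lemma exists_const_subseq_or_tendsto_atTop (s : ℕ → ℕ) :
    (∃ b, ∃ φ : ℕ → ℕ, StrictMono φ ∧ ∀ k, s (φ k) = b) ∨ Tendsto s atTop atTop := by
  by_cases h : ∀ b, (s ⁻¹' {b}).Finite
  · right
    rw [← Nat.cofinite_eq_atTop]
    exact .cofinite_of_finite_preimage_singleton h
  · left
    obtain ⟨b, hb⟩ := not_forall.1 h
    obtain ⟨φ, hφ, hs⟩ := extraction_of_frequently_atTop (Nat.frequently_atTop_iff_infinite.2 hb)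
    exact ⟨b, φ, hφ, hs⟩

lemma compl_qKer_subset_eqRegionFam {n : ℕ} {f : ℕ → Pn n → Pn n} {M : Mat n}
    (hconv : QPConv f M) : (qKer M)ᶜ ⊆ eqRegionFam f := by
  intro z hz
  refine ⟨(qKer M)ᶜ, (isClosed_projSet _).isOpen_compl, hz, fun s => ?_⟩
  rcases exists_const_subseq_or_tendsto_atTop s with ⟨b, φ, hφ, hs⟩ | hs
  · refine ⟨φ, hφ, f b, fun K _ _ W _ hdiag => .of_forall fun k x _ => ?_⟩
    simpa only [hs k] using hdiag (f b x)
  · exact ⟨id, strictMono_id, qMap M, hconv.comp_tendsto hs⟩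

lemma exists_linearMap_apply_ne_zero_and {K ι : Type*} [Semiring K] {v w : ι → K}
    (hv : v ≠ 0) (hw : w ≠ 0) : ∃ f : (ι → K) →ₗ[K] K, f v ≠ 0 ∧ f w ≠ 0 := by
  obtain ⟨i, hi⟩ := Function.ne_iff.1 hv
  obtain ⟨j, hj⟩ := Function.ne_iff.1 hw
  by_cases hwi : w i = 0
  · by_cases hvj : v j = 0
    · refine ⟨LinearMap.proj (R := K) (φ := fun _ => K) i + LinearMap.proj j, ?_, ?_⟩ <;>
        simpa only [LinearMap.add_apply, LinearMap.proj_apply, hvj, hwi, add_zero, zero_add]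
    · exact ⟨LinearMap.proj j, hvj, hj⟩
  · exact ⟨LinearMap.proj i, hi, hwi⟩

section ProjectiveSubspaces

variable {n : ℕ}

lemma exists_hyperplane_notMem_projSet (p q : Pn n) :
    ∃ H : Submodule ℂ (Vec n), n ≤ Module.finrank ℂ H ∧ p ∉ projSet H ∧ q ∉ projSet H := by
  obtain ⟨f, hp, hq⟩ := exists_linearMap_apply_ne_zero_and p.rep_nonzero q.rep_nonzero
  refine ⟨LinearMap.ker f, ?_, hp, hq⟩
  have hrank : Module.finrank ℂ (LinearMap.range f) +
      Module.finrank ℂ (LinearMap.ker f : Submodule ℂ (Vec n)) = n + 1 := by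
    rw [f.finrank_range_add_finrank_ker, Module.finrank_fin_fun]
  have hrange : Module.finrank ℂ (LinearMap.range f) ≤ 1 :=
    (Module.finrank_self ℂ).le.trans' (LinearMap.range f).finrank_le
  omega

lemma exists_line_inter_projSet_eq {W : Submodule ℂ (Vec n)} (hW : W ≠ ⊤) {z : Pn n}
    (hz : z ∈ projSet W) : ∃ L : Submodule ℂ (Vec n), Module.finrank ℂ L = 2 ∧
      z ∈ projSet L ∧ ∀ p ∈ projSet L, p ∈ projSet W → p = z := by
  obtain ⟨w, -, hw⟩ := SetLike.exists_of_lt hW.lt_top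
  have hw0 : w ≠ 0 := fun h => hw (h ▸ W.zero_mem)
  set q := mk ℂ w hw0
  have hq : q ∉ projSet W := (mk_mem_projSet_iff hw0).not.2 hw
  have hzq : z ≠ q := fun h => hq (h ▸ hz)
  refine ⟨Submodule.span ℂ (Set.range ![z.rep, q.rep]), ?_, Submodule.subset_span ⟨0, rfl⟩, ?_⟩
  · rw [finrank_span_eq_card (linearIndependent_pair_iff_ne.2 hzq)]
    simp
  · intro p hpL hpW
    obtain ⟨a, b, hab⟩ := Submodule.mem_span_pair.1 (Matrix.range_cons_cons_empty _ _ ![] ▸ hpL)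
    have hb : b = 0 := by
      by_contra hb
      refine hq ((W.smul_mem_iff hb).1 ?_)
      rw [← add_sub_cancel_left (a • z.rep) (b • q.rep), hab]
      exact W.sub_mem hpW (W.smul_mem a hz)
    rw [hb, zero_smul, add_zero] at hab
    rw [← p.mk_rep, ← z.mk_rep]
    exact (mk_eq_mk_iff' ℂ _ _ _ _).2 ⟨a, hab⟩

lemma exists_mem_projSet_actGL_mem_projSet (A : GLn n) {L H : Submodule ℂ (Vec n)}
    (h : n + 1 < Module.finrank ℂ L + Module.finrank ℂ H) :
    ∃ p ∈ projSet L, actGL A p ∈ projSet H := by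
  let g : L →ₗ[ℂ] Vec n ⧸ H := H.mkQ ∘ₗ Matrix.mulVecLin (A : Mat n) ∘ₗ L.subtype
  have hdim : Module.finrank ℂ (Vec n ⧸ H) < Module.finrank ℂ L := by
    have := H.finrank_quotient_add_finrank
    rw [Module.finrank_fin_fun] at this
    omega
  obtain ⟨⟨y, hyL⟩, hy, hy0⟩ :=
    Submodule.exists_mem_ne_zero_of_ne_bot (LinearMap.ker_ne_bot_of_finrank_lt (f := g) hdim)
  have hy0' : y ≠ 0 := fun h => hy0 (Subtype.ext h)
  refine ⟨mk ℂ y hy0', (mk_mem_projSet_iff hy0').2 hyL, ?_⟩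
  rw [actGL, map_mk, mk_mem_projSet_iff]
  exact (Submodule.Quotient.mk_eq_zero H).1 (LinearMap.mem_ker.1 hy)

end ProjectiveSubspaces

section QuasiProjective

variable {n : ℕ} {M : Mat n}

lemma IsProjHyperplane.finrank_range_mulVecLin (hker : IsProjHyperplane (qKer M)) :
    Module.finrank ℂ (LinearMap.range (Matrix.mulVecLin M)) = 1 := by
  obtain ⟨W, hW, hWeq⟩ := hker
  have hrank := (Matrix.mulVecLin M).finrank_range_add_finrank_ker
  rw [projSet_injective hWeq, hW, Module.finrank_fin_fun] at hrank
  omega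

lemma exists_forall_qMap_eq (h : Module.finrank ℂ (LinearMap.range (Matrix.mulVecLin M)) = 1) :
    ∃ c : Pn n, ∀ x ∉ qKer M, qMap M x = c := by
  obtain ⟨u, hu, hspan⟩ := finrank_eq_one_iff'.1 h
  refine ⟨mk ℂ u.1 (Subtype.coe_ne_coe.2 hu), fun x hx => ?_⟩
  have hMx : M *ᵥ x.rep ≠ 0 := fun h0 => hx (LinearMap.mem_ker.2 h0)
  obtain ⟨a, ha⟩ := hspan ⟨M *ᵥ x.rep, LinearMap.mem_range_self _ _⟩
  rw [qMap, dif_pos hMx]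
  exact (mk_eq_mk_iff' ℂ _ _ _ _).2 ⟨a, congrArg Subtype.val ha⟩

lemma not_unifConvOnCompacts_of_mem_qKer {γ : ℕ → PSLn n}
    (hconv : QPConv (fun m => actPSL (γ m)) M) (hker : IsProjHyperplane (qKer M))
    {z : Pn n} (hz : z ∈ qKer M) {U : Set (Pn n)} (hU : IsOpen U) (hzU : z ∈ U)
    (F : Pn n → Pn n) : ¬ UnifConvOnCompacts (fun m => actPSL (γ m)) F U := by
  intro hF
  have hrange := hker.finrank_range_mulVecLin
  have hker_ne_top : LinearMap.ker (Matrix.mulVecLin M) ≠ ⊤ := fun h => by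
    rw [LinearMap.ker_eq_top.1 h, LinearMap.range_zero, finrank_bot] at hrange
    exact zero_ne_one hrange
  obtain ⟨c, hc⟩ := exists_forall_qMap_eq hrange
  obtain ⟨L, hL, -, hLK⟩ := exists_line_inter_projSet_eq hker_ne_top hz
  obtain ⟨K, hK, hzK, hKU⟩ := exists_compact_subset hU hzU
  obtain ⟨H, hH, hcH, hFzH⟩ := exists_hyperplane_notMem_projSet c (F z)
  have hFK : Set.MapsTo F (K ∩ projSet L) {c, F z} := by
    rintro x ⟨hxK, hxL⟩
    by_cases hxz : x = z
    · exact Or.inr (congrArg F hxz)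
    · have hx : x ∉ qKer M := fun hx => hxz (hLK x hxL hx)
      exact Or.inl (tendsto_nhds_unique (hF.tendsto (hKU hxK)) (hc x hx ▸ hconv.tendsto hx))
  have hfar_sub : projSet L \ interior K ⊆ (qKer M)ᶜ :=
    fun x ⟨hxL, hxK⟩ hx => hxK (hLK x hxL hx ▸ hzK)
  have hnear := (hF _ (Set.inter_subset_left.trans hKU)
    (hK.inter_right (isClosed_projSet L))).eventually_mapsTo (Set.toFinite _).isClosed
    (isClosed_projSet H).isOpen_compl (Set.pair_subset hcH hFzH) hFK
  have hfar := (hconv _ hfar_sub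
    ((isClosed_projSet L).isCompact.diff isOpen_interior)).eventually_mapsTo isClosed_singleton
    (isClosed_projSet H).isOpen_compl (Set.singleton_subset_iff.2 hcH)
    fun x hx => hc x (hfar_sub hx)
  obtain ⟨m, hm_near, hm_far⟩ := (hnear.and hfar).exists
  obtain ⟨p, hpL, hpH⟩ := exists_mem_projSet_actGL_mem_projSet
    (Matrix.SpecialLinearGroup.toGL (γ m).out) (L := L) (H := H) (by omega)
  by_cases hp : p ∈ interior K
  exacts [hm_near ⟨interior_subset hp, hpL⟩ hpH, hm_far ⟨hpL, hp⟩ hpH]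

end QuasiProjective

theorem eqRegion_of_family_eq_compl_ker_general
    (n : ℕ) (γ : ℕ → PSLn n) (M : Mat n)
    (hconv : QPConv (fun m => actPSL (γ m)) M) (hker : IsProjHyperplane (qKer M)) :
    eqRegionFam (fun m => actPSL (γ m)) = (qKer M)ᶜ := by
  refine Set.Subset.antisymm ?_ (compl_qKer_subset_eqRegionFam hconv)
  rintro z ⟨U, hU, hzU, hsubseq⟩ hz
  obtain ⟨φ, hφ, F, hF⟩ := hsubseq id
  exact not_unifConvOnCompacts_of_mem_qKer (γ := γ ∘ φ) (hconv.comp_tendsto hφ.tendsto_atTop)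
    hker hz hU hzU F hF

/-- If a sequence `(γ_m) ⊆ PSL(n+1,ℂ)` converges as quasi-projective
transformations to `γ` and `Ker(γ)` is a hyperplane, then the equicontinuity region of
the family `{γ_m : m ∈ ℕ}` is exactly `ℙⁿ_ℂ ∖ Ker(γ)`. -/
theorem eqRegion_of_family_eq_compl_ker
    (n : ℕ) (hn : 1 ≤ n) (γ : ℕ → PSLn n) (M : Mat n) (hM : M ≠ 0)
    (hconv : QPConv (fun m => actPSL (γ m)) M) (hker : IsProjHyperplane (qKer M)) :
    eqRegionFam (fun m => actPSL (γ m)) = (qKer M)ᶜ :=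
  eqRegion_of_family_eq_compl_ker_general n γ M hconv hker
end
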